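/- arXiv:2603.17489 — 4 statements merged into one kernel-verified Lean document; each statement's English description precedes it below -/
import Mathlib

section
/- Let X₂ be a multiset of 2m integers, each lying in the interval (4S, 6S] for some positive integer S, with total sum 2(4m+2)S. Let X₄ be the multiset obtained by adding 2(m+1) additional items each of size 4S to X₂. Then X₄ can be partitioned into four parts each of sum at least (4m+2)S if and only if X₂ can be partitioned into two parts each of cardinality m and sum exactly (4m+2)S. -/
/-!
All 4m + 2 items of X₄ are at least 4S, so a part with k items has sum at least
max(4k, 4m + 2)·S. Summing over the four parts against the total 4(4m + 3)S forces every part to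
have m or m + 1 items, hence two of each, and forces all these lower bounds to be tight. The two
parts with m + 1 items then consist of 4S's only, so they use up the added items, and the other
two parts split X₂ into halves of m items and sum (4m + 2)S.
-/

open Multiset

theorem Multiset.eq_replicate_of_forall_le_of_sum_le {α : Type*} [AddCommMonoid α]
    [LinearOrder α] [IsOrderedCancelAddMonoid α] {s : Multiset α} {a : α} (h : ∀ x ∈ s, a ≤ x)
    (hs : s.sum ≤ card s • a) : s = replicate (card s) a := by
  refine eq_replicate_card.2 fun b hb => (h b hb).antisymm' ?_
  by_contra! hab
  have := sum_lt_sum (f := fun _ => a) (g := id) h ⟨b, hb, hab⟩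
  simp only [map_const', sum_replicate, map_id] at this
  exact this.not_ge hs

theorem Multiset.forall_le_of_mem_add_replicate {α : Type*} [Preorder α] {s : Multiset α}
    {a : α} (h : ∀ x ∈ s, a ≤ x) (n : ℕ) : ∀ x ∈ s + replicate n a, a ≤ x := by
  simp only [mem_add]
  rintro x (hx | hx)
  exacts [h x hx, (eq_of_mem_replicate hx).ge]

theorem Multiset.max_mul_le_sum {P : Multiset ℕ} {a b S : ℕ} (hlow : ∀ x ∈ P, a * S ≤ x)
    (hb : b * S ≤ P.sum) : max (a * card P) b * S ≤ P.sum := by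
  rw [← max_mul_mul_right]
  refine max_le ?_ hb
  calc a * card P * S = card P • (a * S) := by rw [smul_eq_mul]; ring
    _ ≤ P.sum := card_nsmul_le_sum hlow

theorem card_parts_cases {m S : ℕ} (hS : 0 < S) {P₁ P₂ P₃ P₄ : Multiset ℕ}
    (hlow : ∀ x ∈ P₁ + P₂ + P₃ + P₄, 4 * S ≤ x)
    (hcard : card (P₁ + P₂ + P₃ + P₄) = 4 * m + 2)
    (hsum : (P₁ + P₂ + P₃ + P₄).sum = 4 * (4 * m + 3) * S)
    (h₁ : (4 * m + 2) * S ≤ P₁.sum) (h₂ : (4 * m + 2) * S ≤ P₂.sum)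
    (h₃ : (4 * m + 2) * S ≤ P₃.sum) (h₄ : (4 * m + 2) * S ≤ P₄.sum) :
    card P₁ = m ∧ card P₂ = m ∧ card P₃ = m + 1 ∧ card P₄ = m + 1 ∨
    card P₁ = m ∧ card P₃ = m ∧ card P₂ = m + 1 ∧ card P₄ = m + 1 ∨
    card P₁ = m ∧ card P₄ = m ∧ card P₂ = m + 1 ∧ card P₃ = m + 1 ∨
    card P₂ = m ∧ card P₃ = m ∧ card P₁ = m + 1 ∧ card P₄ = m + 1 ∨
    card P₂ = m ∧ card P₄ = m ∧ card P₁ = m + 1 ∧ card P₃ = m + 1 ∨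
    card P₃ = m ∧ card P₄ = m ∧ card P₁ = m + 1 ∧ card P₂ = m + 1 := by
  simp only [card_add] at hcard
  have hbounds : m ≤ card P₁ ∧ card P₁ ≤ m + 1 ∧ m ≤ card P₂ ∧ card P₂ ≤ m + 1 ∧
      m ≤ card P₃ ∧ card P₃ ≤ m + 1 ∧ m ≤ card P₄ ∧ card P₄ ≤ m + 1 := by
    have hmax : max (4 * card P₁) (4 * m + 2) + max (4 * card P₂) (4 * m + 2) +
        max (4 * card P₃) (4 * m + 2) + max (4 * card P₄) (4 * m + 2) ≤ 4 * (4 * m + 3) := by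
      refine Nat.le_of_mul_le_mul_right ?_ hS
      rw [← hsum, sum_add, sum_add, sum_add, add_mul, add_mul, add_mul]
      gcongr <;> exact max_mul_le_sum (fun x hx => hlow x (by simp [hx])) ‹_›
    omega
  omega

theorem exists_halves_of_card_parts {m S : ℕ} {X₂ : Multiset ℕ}
    (hlow : ∀ x ∈ X₂, 4 * S ≤ x) (hsum : X₂.sum = 2 * (4 * m + 2) * S)
    ⦃Q₁ Q₂ Q₃ Q₄ : Multiset ℕ⦄
    (hsplit : X₂ + replicate (2 * (m + 1)) (4 * S) = Q₁ + Q₂ + Q₃ + Q₄)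
    (h₁ : (4 * m + 2) * S ≤ Q₁.sum) (h₂ : (4 * m + 2) * S ≤ Q₂.sum)
    (hc₁ : card Q₁ = m) (hc₂ : card Q₂ = m) (hc₃ : card Q₃ = m + 1) (hc₄ : card Q₄ = m + 1) :
    ∃ A B : Multiset ℕ, X₂ = A + B ∧ card A = m ∧ card B = m ∧
      A.sum = (4 * m + 2) * S ∧ B.sum = (4 * m + 2) * S := by
  have hlow' := hsplit ▸ forall_le_of_mem_add_replicate hlow _
  have hlow₃ : ∀ x ∈ Q₃, 4 * S ≤ x := fun x hx => hlow' x (by simp [hx])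
  have hlow₄ : ∀ x ∈ Q₄, 4 * S ≤ x := fun x hx => hlow' x (by simp [hx])
  have l₃ := card_nsmul_le_sum hlow₃
  have l₄ := card_nsmul_le_sum hlow₄
  have htot := congrArg Multiset.sum hsplit
  simp only [sum_add, sum_replicate, hsum, smul_eq_mul, hc₃, hc₄] at htot l₃ l₄
  have hQ₃ := eq_replicate_of_forall_le_of_sum_le hlow₃ (by rw [hc₃, smul_eq_mul]; linarith)
  have hQ₄ := eq_replicate_of_forall_le_of_sum_le hlow₄ (by rw [hc₄, smul_eq_mul]; linarith)
  refine ⟨Q₁, Q₂, add_right_cancel (hsplit.trans ?_), hc₁, hc₂, by linarith, by linarith⟩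
  rw [add_assoc, hQ₃, hQ₄, hc₃, hc₄, ← replicate_add, two_mul]

theorem four_way_key_claim_general (m S : ℕ) (hS : 1 ≤ S)
    (X₂ : Multiset ℕ)
    (hcard : Multiset.card X₂ = 2 * m)
    (hrange : ∀ x ∈ X₂, 4 * S < x ∧ x ≤ 6 * S)
    (hsum : X₂.sum = 2 * (4 * m + 2) * S)
    (X₄ : Multiset ℕ) (hX₄ : X₄ = X₂ + Multiset.replicate (2 * (m + 1)) (4 * S)) :
    (∃ P₁ P₂ P₃ P₄ : Multiset ℕ, X₄ = P₁ + P₂ + P₃ + P₄ ∧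
        (4 * m + 2) * S ≤ P₁.sum ∧ (4 * m + 2) * S ≤ P₂.sum ∧
        (4 * m + 2) * S ≤ P₃.sum ∧ (4 * m + 2) * S ≤ P₄.sum) ↔
    (∃ A B : Multiset ℕ, X₂ = A + B ∧ Multiset.card A = m ∧ Multiset.card B = m ∧
        A.sum = (4 * m + 2) * S ∧ B.sum = (4 * m + 2) * S) := by
  subst hX₄
  have hlow : ∀ x ∈ X₂, 4 * S ≤ x := fun x hx => (hrange x hx).1.le
  constructor
  · rintro ⟨P₁, P₂, P₃, P₄, hsplit, h₁, h₂, h₃, h₄⟩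
    have key := exists_halves_of_card_parts hlow hsum
    rcases card_parts_cases hS (hsplit ▸ forall_le_of_mem_add_replicate hlow _)
      (by simp [← hsplit, hcard]; ring) (by simp [← hsplit, hsum]; ring) h₁ h₂ h₃ h₄ with
      ⟨c₁, c₂, c₃, c₄⟩ | ⟨c₁, c₂, c₃, c₄⟩ | ⟨c₁, c₂, c₃, c₄⟩ |
      ⟨c₁, c₂, c₃, c₄⟩ | ⟨c₁, c₂, c₃, c₄⟩ | ⟨c₁, c₂, c₃, c₄⟩
    · exact key hsplit h₁ h₂ c₁ c₂ c₃ c₄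
    · exact key (hsplit.trans (by abel)) h₁ h₃ c₁ c₂ c₃ c₄
    · exact key (hsplit.trans (by abel)) h₁ h₄ c₁ c₂ c₃ c₄
    · exact key (hsplit.trans (by abel)) h₂ h₃ c₁ c₂ c₃ c₄
    · exact key (hsplit.trans (by abel)) h₂ h₄ c₁ c₂ c₃ c₄
    · exact key (hsplit.trans (by abel)) h₃ h₄ c₁ c₂ c₃ c₄
  · rintro ⟨A, B, rfl, -, -, hA, hB⟩
    have hfull : (4 * m + 2) * S ≤ (replicate (m + 1) (4 * S)).sum := by
      rw [sum_replicate, smul_eq_mul]; linarith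
    refine ⟨A, B, _, _, ?_, hA.ge, hB.ge, hfull, hfull⟩
    rw [two_mul, replicate_add]
    abel

theorem four_way_key_claim (m S : ℕ) (hm : 1 ≤ m) (hS : 1 ≤ S)
    (X₂ : Multiset ℕ)
    (hcard : Multiset.card X₂ = 2 * m)
    (hrange : ∀ x ∈ X₂, 4 * S < x ∧ x ≤ 6 * S)
    (hsum : X₂.sum = 2 * (4 * m + 2) * S)
    (X₄ : Multiset ℕ) (hX₄ : X₄ = X₂ + Multiset.replicate (2 * (m + 1)) (4 * S)) :
    (∃ P₁ P₂ P₃ P₄ : Multiset ℕ, X₄ = P₁ + P₂ + P₃ + P₄ ∧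
        (4 * m + 2) * S ≤ P₁.sum ∧ (4 * m + 2) * S ≤ P₂.sum ∧
        (4 * m + 2) * S ≤ P₃.sum ∧ (4 * m + 2) * S ≤ P₄.sum) ↔
    (∃ A B : Multiset ℕ, X₂ = A + B ∧ Multiset.card A = m ∧ Multiset.card B = m ∧
        A.sum = (4 * m + 2) * S ∧ B.sum = (4 * m + 2) * S) :=
  four_way_key_claim_general m S hS X₂ hcard hrange hsum X₄ hX₄
end

section
/- Under the same setup: in any partition of X₄ into four parts each of sum at least (4m+2)S, some two of the four parts together contain exactly 2(m+1) items, and these 2(m+1) items all have size exactly 4S. -/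
/-!
Every item has size at least `4S` and every bin receives at least `(4m+2)S`, so the other three
bins leave at most `(4m+6)S < (m+2)·4S` for any one bin: each bin holds at most `m+1` items.
Since the `4m+2` items fill the four bins to within two of their capacity `m+1`, two bins are
full. These two bins hold `2(m+1)` items of total size at most `2(4m+4)S = 2(m+1)·4S`, which
forces every one of those items to have size exactly `4S`.
-/

theorem Multiset.eq_of_forall_le_of_sum_le_card_nsmul {α : Type*} [AddCommMonoid α]
    [PartialOrder α] [IsOrderedCancelAddMonoid α] {s : Multiset α} {c : α}
    (hle : ∀ x ∈ s, c ≤ x) (hsum : s.sum ≤ card s • c) : ∀ x ∈ s, x = c := by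
  intro x hx
  by_contra hne
  have hlt := Multiset.sum_lt_sum (f := fun _ ↦ c) (g := id) hle
    ⟨x, hx, lt_of_le_of_ne (hle x hx) (Ne.symm hne)⟩
  rw [Multiset.map_const', Multiset.sum_replicate, Multiset.map_id] at hlt
  exact hsum.not_gt hlt

theorem Multiset.card_lt_of_sum_lt_mul {s : Multiset ℕ} {c n : ℕ} (hle : ∀ x ∈ s, c ≤ x)
    (hsum : s.sum < n * c) : card s < n :=
  Nat.lt_of_mul_lt_mul_right ((Multiset.card_nsmul_le_sum hle).trans_lt hsum)

theorem Finset.add_add_nsmul_le_sum {ι M : Type*} [Fintype ι] [AddCommMonoid M]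
    [PartialOrder M] [IsOrderedAddMonoid M] {f : ι → M} {L : M} (hL : ∀ k, L ≤ f k)
    {i j : ι} (hij : i ≠ j) : f i + f j + (Fintype.card ι - 2) • L ≤ ∑ k, f k := by
  classical
  have hj : j ∈ univ.erase i := mem_erase.2 ⟨hij.symm, mem_univ j⟩
  rw [← add_sum_erase _ f (mem_univ i), ← add_sum_erase _ f hj, ← add_assoc]
  gcongr
  calc (Fintype.card ι - 2) • L = ((univ.erase i).erase j).card • L := by
        rw [card_erase_of_mem hj, card_erase_of_mem (mem_univ i), card_univ, Nat.sub_sub]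
    _ ≤ _ := card_nsmul_le_sum _ _ _ fun k _ ↦ hL k

theorem exists_pair_eq_of_forall_le_of_sum_add_two {a : Fin 4 → ℕ} {n : ℕ}
    (hle : ∀ i, a i ≤ n) (hsum : ∑ i, a i + 2 = 4 * n) : ∃ i j, i ≠ j ∧ a i = n ∧ a j = n := by
  by_contra! hne
  rw [Fin.sum_univ_four] at hsum
  have := hle 0; have := hle 1; have := hle 2; have := hle 3
  have := hne 0 1 (by decide); have := hne 0 2 (by decide); have := hne 0 3 (by decide)
  have := hne 1 2 (by decide); have := hne 1 3 (by decide); have := hne 2 3 (by decide)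
  omega

theorem two_bins_of_small_items_general (m S : ℕ) (hS : 1 ≤ S)
    (X₂ : Multiset ℕ)
    (hcard : Multiset.card X₂ = 2 * m)
    (hrange : ∀ x ∈ X₂, 4 * S < x ∧ x ≤ 6 * S)
    (hsum : X₂.sum = 2 * (4 * m + 2) * S)
    (X₄ : Multiset ℕ) (hX₄ : X₄ = X₂ + Multiset.replicate (2 * (m + 1)) (4 * S))
    (P : Fin 4 → Multiset ℕ) (hP : X₄ = ∑ i, P i)
    (hbound : ∀ i, (4 * m + 2) * S ≤ (P i).sum) :
    ∃ i j : Fin 4, i ≠ j ∧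
      Multiset.card (P i) + Multiset.card (P j) = 2 * (m + 1) ∧
      (∀ x ∈ P i + P j, x = 4 * S) := by
  have hitem : ∀ i, ∀ x ∈ P i, 4 * S ≤ x := by
    intro i x hx
    have hx₄ : x ∈ X₄ :=
      hP ▸ Multiset.mem_of_le (Finset.single_le_sum (fun _ _ ↦ zero_le) (Finset.mem_univ i)) hx
    rw [hX₄, Multiset.mem_add, Multiset.mem_replicate] at hx₄
    rcases hx₄ with hx₂ | ⟨-, rfl⟩
    exacts [(hrange x hx₂).1.le, le_rfl]
  have htotal : ∑ i, (P i).sum = 4 * (4 * m + 3) * S :=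
    calc ∑ i, (P i).sum = X₄.sum := hP ▸ (map_sum Multiset.sumAddMonoidHom P _).symm
      _ = 4 * (4 * m + 3) * S := by
        rw [hX₄, Multiset.sum_add, Multiset.sum_replicate, hsum, smul_eq_mul]
        ring
  have hpair : ∀ i j, i ≠ j → (P i).sum + (P j).sum ≤ 2 * (4 * m + 4) * S := by
    intro i j hij
    have := Finset.add_add_nsmul_le_sum hbound hij
    rw [htotal, Fintype.card_fin, smul_eq_mul] at this
    linarith
  have hcard_le : ∀ i, Multiset.card (P i) ≤ m + 1 := by
    intro i
    obtain ⟨j, hji⟩ := exists_ne i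
    refine Nat.lt_succ_iff.1 (Multiset.card_lt_of_sum_lt_mul (hitem i) ?_)
    nlinarith [hpair i j hji.symm, hbound j]
  have hcard_total : ∑ i, Multiset.card (P i) = 4 * m + 2 := by
    rw [← Multiset.card_sum, ← hP, hX₄, Multiset.card_add, Multiset.card_replicate, hcard]
    ring
  obtain ⟨i, j, hij, hi, hj⟩ :=
    exists_pair_eq_of_forall_le_of_sum_add_two hcard_le (by rw [hcard_total]; ring)
  refine ⟨i, j, hij, by omega, Multiset.eq_of_forall_le_of_sum_le_card_nsmul ?_ ?_⟩
  · simpa only [Multiset.mem_add, or_imp, forall_and] using ⟨hitem i, hitem j⟩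
  · rw [Multiset.sum_add, Multiset.card_add, hi, hj, smul_eq_mul]
    linarith [hpair i j hij]

theorem two_bins_of_small_items (m S : ℕ) (hm : 1 ≤ m) (hS : 1 ≤ S)
    (X₂ : Multiset ℕ)
    (hcard : Multiset.card X₂ = 2 * m)
    (hrange : ∀ x ∈ X₂, 4 * S < x ∧ x ≤ 6 * S)
    (hsum : X₂.sum = 2 * (4 * m + 2) * S)
    (X₄ : Multiset ℕ) (hX₄ : X₄ = X₂ + Multiset.replicate (2 * (m + 1)) (4 * S))
    (P : Fin 4 → Multiset ℕ) (hP : X₄ = ∑ i, P i)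
    (hbound : ∀ i, (4 * m + 2) * S ≤ (P i).sum) :
    ∃ i j : Fin 4, i ≠ j ∧
      Multiset.card (P i) + Multiset.card (P j) = 2 * (m + 1) ∧
      (∀ x ∈ P i + P j, x = 4 * S) :=
  two_bins_of_small_items_general m S hS X₂ hcard hrange hsum X₄ hX₄ P hP hbound
end

section
/- Under the same setup: in any partition of X₄ into four parts each of sum at least (4m+2)S, the two parts containing the 2m items of X₂ each have sum exactly (4m+2)S and each contain exactly m items. -/
/-! Two parts of `X₂`, each of sum at least `(4m+2)S`, split its sum `2(4m+2)S`, so both sums are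
exact; a part with more than `m` items, all larger than `4S`, would have sum above `(4m+4)S`. -/

theorem Multiset.card_le_of_forall_lt_of_sum_le {s : Multiset ℕ} {a k : ℕ}
    (hs : ∀ x ∈ s, a < x) (hsum : s.sum ≤ (k + 1) * a) : card s ≤ k := by
  have hcard : card s • (a + 1) ≤ s.sum := card_nsmul_le_sum hs
  rw [smul_eq_mul] at hcard
  by_contra! hk
  nlinarith

theorem big_bins_structure_general (m S : ℕ)
    (X₂ : Multiset ℕ)
    (hcard : Multiset.card X₂ = 2 * m)
    (hrange : ∀ x ∈ X₂, 4 * S < x ∧ x ≤ 6 * S)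
    (hsum : X₂.sum = 2 * (4 * m + 2) * S)
    (P₃ P₄ : Multiset ℕ)
    (h3 : (4 * m + 2) * S ≤ P₃.sum)
    (h4 : (4 * m + 2) * S ≤ P₄.sum)
    (hX₂parts : P₃ + P₄ = X₂) :
    P₃.sum = (4 * m + 2) * S ∧ P₄.sum = (4 * m + 2) * S ∧
    Multiset.card P₃ = m ∧ Multiset.card P₄ = m := by
  have hsum34 : P₃.sum + P₄.sum = (4 * m + 2) * S + (4 * m + 2) * S := by
    rw [← Multiset.sum_add, hX₂parts, hsum]; ring
  have hs3 : P₃.sum = (4 * m + 2) * S := by omega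
  have hs4 : P₄.sum = (4 * m + 2) * S := by omega
  have hcard34 : Multiset.card P₃ + Multiset.card P₄ = 2 * m := by
    rw [← Multiset.card_add, hX₂parts, hcard]
  have hcard_le : ∀ P ≤ X₂, P.sum = (4 * m + 2) * S → Multiset.card P ≤ m := fun P hP hPs =>
    Multiset.card_le_of_forall_lt_of_sum_le
      (fun x hx => (hrange x (Multiset.mem_of_le hP hx)).1) (by rw [hPs]; nlinarith)
  have h3le := hcard_le P₃ (hX₂parts ▸ Multiset.le_add_right _ _) hs3
  have h4le := hcard_le P₄ (hX₂parts ▸ Multiset.le_add_left _ _) hs4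
  exact ⟨hs3, hs4, by omega, by omega⟩

theorem big_bins_structure (m S : ℕ) (hm : 1 ≤ m) (hS : 1 ≤ S)
    (X₂ : Multiset ℕ)
    (hcard : Multiset.card X₂ = 2 * m)
    (hrange : ∀ x ∈ X₂, 4 * S < x ∧ x ≤ 6 * S)
    (hsum : X₂.sum = 2 * (4 * m + 2) * S)
    (X₄ : Multiset ℕ) (hX₄ : X₄ = X₂ + Multiset.replicate (2 * (m + 1)) (4 * S))
    (P₁ P₂ P₃ P₄ : Multiset ℕ) (hP : X₄ = P₁ + P₂ + P₃ + P₄)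
    (h1 : (4 * m + 2) * S ≤ P₁.sum) (h2 : (4 * m + 2) * S ≤ P₂.sum)
    (h3 : (4 * m + 2) * S ≤ P₃.sum) (h4 : (4 * m + 2) * S ≤ P₄.sum)
    (hX₂parts : P₃ + P₄ = X₂) :
    P₃.sum = (4 * m + 2) * S ∧ P₄.sum = (4 * m + 2) * S ∧
    Multiset.card P₃ = m ∧ Multiset.card P₄ = m :=
  big_bins_structure_general m S X₂ hcard hrange hsum P₃ P₄ h3 h4 hX₂parts
end

section
/- Motzkin–Straus theorem: Let G be a finite simple graph on vertex set {1,…,n} with clique number ω(G) ≥ 1. Then the maximum over y in the standard simplex Δⁿ = {y ∈ ℝⁿ : y_i ≥ 0, Σ y_i = 1} of g(G,y) := Σ_{{i,j} ∈ E(G)} y_i y_j equals (1/2)(1 − 1/ω(G)). -/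
/-!
Twice the edge sum is the quadratic form `y ⬝ᵥ A *ᵥ y` of the adjacency matrix `A`. If the support
of `y` is not a clique, pick non-adjacent `i ≠ j` in it: since `A i i = A j j = A i j = 0`, the
form is affine along `e_i - e_j`, so moving all the mass of `j` onto `i` (or vice versa) does not
decrease it and strictly shrinks the support. So it suffices to bound the form at points supported
on a clique `S`, where it equals `1 - ∑ y_i ^ 2 ≤ 1 - 1 / |S|` by Cauchy–Schwarz. The uniform
distribution on a maximum clique attains `1 - 1 / ω`.
-/

open Finset Matrix

theorem Matrix.IsSymm.dotProduct_mulVec_add_smul {n R : Type*} [Fintype n] [CommRing R]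
    {A : Matrix n n R} (hA : A.IsSymm) (x d : n → R) (t : R) :
    (x + t • d) ⬝ᵥ A *ᵥ (x + t • d) =
      x ⬝ᵥ A *ᵥ x + 2 * t * (d ⬝ᵥ A *ᵥ x) + t ^ 2 * (d ⬝ᵥ A *ᵥ d) := by
  have hsymm : x ⬝ᵥ A *ᵥ d = d ⬝ᵥ A *ᵥ x := by
    rw [← dotProduct_transpose_mulVec, hA.eq]
  simp only [mulVec_add, mulVec_smul, add_dotProduct, dotProduct_add, smul_dotProduct,
    dotProduct_smul, smul_eq_mul, hsymm]
  ring

theorem one_div_le_sum_sq_of_card_le {ι : Type*} [Fintype ι] {y : ι → ℝ} {s : Finset ι}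
    (hs : ∀ i ∉ s, y i = 0) (hy : ∑ i, y i = 1) {k : ℕ} (hk : #s ≤ k) :
    1 / (k : ℝ) ≤ ∑ i, y i ^ 2 := by
  have hsum : ∑ i ∈ s, y i = 1 := by
    rw [sum_subset (subset_univ s) fun i _ hi => hs i hi, hy]
  have hsum_sq : ∑ i ∈ s, y i ^ 2 = ∑ i, y i ^ 2 :=
    sum_subset (subset_univ s) fun i _ hi => by simp [hs i hi]
  have hcard : (0 : ℝ) < #s := by
    have : s.Nonempty := nonempty_of_sum_ne_zero (by rw [hsum]; exact one_ne_zero)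
    exact_mod_cast this.card_pos
  have hcs := sq_sum_le_card_mul_sum_sq (s := s) (f := y)
  rw [hsum, hsum_sq, one_pow] at hcs
  calc 1 / (k : ℝ) ≤ 1 / #s := one_div_le_one_div_of_le hcard (by exact_mod_cast hk)
    _ ≤ ∑ i, y i ^ 2 := by rwa [div_le_iff₀ hcard, mul_comm]

namespace SimpleGraph

variable {V : Type*} [Fintype V] (G : SimpleGraph V) [DecidableRel G.Adj]

theorem sum_dart_edge [DecidableEq V] {M : Type*} [AddCommMonoid M] (f : Sym2 V → M) :
    ∑ d : G.Dart, f d.edge = 2 • ∑ e ∈ G.edgeFinset, f e := by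
  rw [← sum_fiberwise_of_maps_to (t := G.edgeFinset) (g := Dart.edge)
    (fun d _ => G.mem_edgeFinset.2 d.edge_mem), smul_sum]
  refine sum_congr rfl fun e he => ?_
  rw [sum_congr rfl fun d hd => congrArg f (mem_filter.1 hd).2, sum_const,
    G.dart_edge_fiber_card e (G.mem_edgeFinset.1 he)]

theorem two_mul_sum_edgeFinset_lift_mul {R : Type*} [CommSemiring R] (y : V → R) :
    2 * ∑ e ∈ G.edgeFinset, Sym2.lift ⟨fun i j => y i * y j, fun i j => mul_comm (y i) (y j)⟩ e
      = y ⬝ᵥ G.adjMatrix R *ᵥ y := by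
  classical
  rw [two_mul, ← two_nsmul, ← sum_dart_edge, dotProduct_mulVec_adjMatrix, ← sum_product',
    ← sum_filter]
  refine sum_bij' (fun d _ => d.toProd) (fun p hp => ⟨p, (mem_filter.1 hp).2⟩) ?_ ?_ ?_ ?_ ?_
    <;> simp [Dart.edge]

theorem dotProduct_adjMatrix_mulVec_self_of_isClique {R : Type*} [CommRing R] {y : V → R}
    (h : G.IsClique (Function.support y)) :
    y ⬝ᵥ G.adjMatrix R *ᵥ y = (∑ i, y i) ^ 2 - ∑ i, y i ^ 2 := by
  classical
  have hterm : ∀ i j, (if G.Adj i j then y i * y j else 0) =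
      y i * y j - if i = j then y i * y j else 0 := by
    intro i j
    by_cases hij : i = j
    · subst hij; simp
    by_cases hadj : G.Adj i j
    · simp [hadj, hij]
    · have : y i * y j = 0 := by
        by_contra hne
        exact hadj (h (left_ne_zero_of_mul hne) (right_ne_zero_of_mul hne) hij)
      simp [hadj, hij, this]
  simp only [dotProduct_mulVec_adjMatrix, hterm, sum_sub_distrib, sum_ite_eq, mem_univ, if_true,
    sq, sum_mul_sum]

theorem dotProduct_adjMatrix_mulVec_single_sub_single [DecidableEq V] {R : Type*} [CommRing R]
    {i j : V} (h : ¬ G.Adj i j) :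
    (Pi.single i 1 - Pi.single j 1) ⬝ᵥ G.adjMatrix R *ᵥ (Pi.single i 1 - Pi.single j 1) = 0 := by
  have h' : ¬ G.Adj j i := fun hji => h hji.symm
  simp [mulVec_sub, sub_dotProduct, dotProduct_sub, adjMatrix_apply, h, h']

theorem exists_support_ssubset_of_not_adj [DecidableEq V] {y : V → ℝ} (hy : y ∈ stdSimplex ℝ V)
    {i j : V} (hi : y i ≠ 0) (hj : y j ≠ 0) (hij : i ≠ j) (hadj : ¬ G.Adj i j)
    (hgrad : 0 ≤ (Pi.single i 1 - Pi.single j 1) ⬝ᵥ G.adjMatrix ℝ *ᵥ y) :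
    ∃ z ∈ stdSimplex ℝ V, Function.support z ⊂ Function.support y ∧
      y ⬝ᵥ G.adjMatrix ℝ *ᵥ y ≤ z ⬝ᵥ G.adjMatrix ℝ *ᵥ z := by
  obtain ⟨hy0, hy1⟩ := hy
  set z := y + y j • (Pi.single i 1 - Pi.single j 1 : V → ℝ) with hz
  have hzi : z i = y i + y j := by simp [hz, hij]
  have hzj : z j = 0 := by simp [hz, hij.symm]
  have hzk : ∀ k, k ≠ i → k ≠ j → z k = y k := fun k hki hkj => by simp [hz, hki, hkj]
  refine ⟨z, ⟨fun k => ?_, ?_⟩, ?_, ?_⟩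
  · by_cases hki : k = i
    · rw [hki, hzi]; exact add_nonneg (hy0 i) (hy0 j)
    by_cases hkj : k = j
    · rw [hkj, hzj]
    rw [hzk k hki hkj]; exact hy0 k
  · simp [hz, sum_add_distrib, ← mul_sum, sum_sub_distrib, hy1]
  · refine Set.ssubset_iff_of_subset (fun k (hk : z k ≠ 0) => ?_) |>.2 ⟨j, hj, not_not.2 hzj⟩
    by_cases hki : k = i
    · exact hki ▸ hi
    by_cases hkj : k = j
    · exact absurd (hkj ▸ hzj) hk
    simpa [hzk k hki hkj] using hk
  · rw [hz, (G.isSymm_adjMatrix).dotProduct_mulVec_add_smul,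
      dotProduct_adjMatrix_mulVec_single_sub_single G hadj]
    have := mul_nonneg (hy0 j) hgrad
    linarith

theorem exists_support_ssubset_of_not_isClique {y : V → ℝ} (hy : y ∈ stdSimplex ℝ V)
    (hy_cl : ¬ G.IsClique (Function.support y)) :
    ∃ z ∈ stdSimplex ℝ V, Function.support z ⊂ Function.support y ∧
      y ⬝ᵥ G.adjMatrix ℝ *ᵥ y ≤ z ⬝ᵥ G.adjMatrix ℝ *ᵥ z := by
  classical
  obtain ⟨i, hi, j, hj, hij, hadj⟩ : ∃ i, y i ≠ 0 ∧ ∃ j, y j ≠ 0 ∧ i ≠ j ∧ ¬ G.Adj i j := by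
    simpa [IsClique, Set.Pairwise] using hy_cl
  rcases le_total 0 ((Pi.single i 1 - Pi.single j 1) ⬝ᵥ G.adjMatrix ℝ *ᵥ y) with hgrad | hgrad
  · exact G.exists_support_ssubset_of_not_adj hy hi hj hij hadj hgrad
  · refine G.exists_support_ssubset_of_not_adj hy hj hi hij.symm (fun h => hadj h.symm) ?_
    rwa [← neg_sub, neg_dotProduct, neg_nonneg]

theorem dotProduct_adjMatrix_mulVec_le {k : ℕ}
    (hk : ∀ s : Finset V, G.IsClique (s : Set V) → #s ≤ k) {y : V → ℝ} (hy : y ∈ stdSimplex ℝ V) : y ⬝ᵥ G.adjMatrix ℝ *ᵥ y ≤ 1 - 1 / k := by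
  classical
  induction hs : Function.support y using WellFoundedLT.induction generalizing y with
  | _ s ih =>
    by_cases hy_cl : G.IsClique s
    · rw [G.dotProduct_adjMatrix_mulVec_self_of_isClique (hs ▸ hy_cl), hy.2, one_pow,
        sub_le_sub_iff_left]
      refine one_div_le_sum_sq_of_card_le (s := s.toFinset) (fun i hi => by simpa [← hs] using hi)
        hy.2 (hk _ (by simpa using hy_cl))
    · obtain ⟨z, hz, hzs, hyz⟩ := G.exists_support_ssubset_of_not_isClique hy (hs ▸ hy_cl)
      exact hyz.trans (ih _ (hs ▸ hzs) hz rfl)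

theorem exists_mem_stdSimplex_dotProduct_adjMatrix_mulVec_eq {s : Finset V}
    (hs : G.IsClique (s : Set V)) (hne : s.Nonempty) :
    ∃ y ∈ stdSimplex ℝ V, y ⬝ᵥ G.adjMatrix ℝ *ᵥ y = 1 - 1 / #s := by
  classical
  have hcard : (#s : ℝ) ≠ 0 := by exact_mod_cast hne.card_pos.ne'
  set y : V → ℝ := fun i => if i ∈ s then (#s : ℝ)⁻¹ else 0
  have hsupp : Function.support y = s := by ext; simp [y, hcard]
  have hsum : ∑ i, y i = 1 := by simp [y, hcard]
  refine ⟨y, ⟨fun i => by simp only [y]; split_ifs <;> positivity, hsum⟩, ?_⟩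
  rw [G.dotProduct_adjMatrix_mulVec_self_of_isClique (hsupp ▸ hs), hsum]
  simp only [ite_pow, inv_pow, ne_eq, OfNat.ofNat_ne_zero, not_false_eq_true, zero_pow,
    sum_ite_mem, univ_inter, sum_const, nsmul_eq_mul, one_pow, sub_right_inj, y]
  field_simp

end SimpleGraph

theorem motzkin_straus_general (n : ℕ) (G : SimpleGraph (Fin n))
    [DecidableRel G.Adj] (ω : ℕ) (hω : 1 ≤ ω)
    (hclique : IsGreatest {k : ℕ | ∃ s : Finset (Fin n), G.IsNClique k s} ω) :
    IsGreatest
      {v : ℝ | ∃ y : Fin n → ℝ, (∀ i, 0 ≤ y i) ∧ (∑ i, y i) = 1 ∧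
        v = ∑ e ∈ G.edgeFinset,
          Sym2.lift ⟨fun i j => y i * y j, fun i j => mul_comm (y i) (y j)⟩ e}
      ((1 / 2) * (1 - 1 / (ω : ℝ))) := by
  have hedge (y : Fin n → ℝ) := G.two_mul_sum_edgeFinset_lift_mul y
  constructor
  · obtain ⟨s, hs⟩ := hclique.1
    have hne : s.Nonempty := card_pos.1 (hs.card_eq ▸ hω)
    obtain ⟨y, ⟨hy0, hy1⟩, hy⟩ :=
      G.exists_mem_stdSimplex_dotProduct_adjMatrix_mulVec_eq hs.isClique hne
    refine ⟨y, hy0, hy1, ?_⟩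
    rw [hs.card_eq] at hy
    linarith [hedge y]
  · rintro _ ⟨y, hy0, hy1, rfl⟩
    have := G.dotProduct_adjMatrix_mulVec_le (fun t ht => hclique.2 ⟨t, ht, rfl⟩) ⟨hy0, hy1⟩
    linarith [hedge y]

theorem motzkin_straus (n : ℕ) (hn : 1 ≤ n) (G : SimpleGraph (Fin n))
    [DecidableRel G.Adj] (ω : ℕ) (hω : 1 ≤ ω)
    (hclique : IsGreatest {k : ℕ | ∃ s : Finset (Fin n), G.IsNClique k s} ω) :
    IsGreatest
      {v : ℝ | ∃ y : Fin n → ℝ, (∀ i, 0 ≤ y i) ∧ (∑ i, y i) = 1 ∧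
        v = ∑ e ∈ G.edgeFinset,
          Sym2.lift ⟨fun i j => y i * y j, fun i j => mul_comm (y i) (y j)⟩ e}
      ((1 / 2) * (1 - 1 / (ω : ℝ))) :=
  motzkin_straus_general n G ω hω hclique
end
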